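/- arXiv:2109.11961 — 4 statements merged into one kernel-verified Lean document; each statement's English description precedes it below -/
import Mathlib

section
/- Let A be a finite abelian group, S ⊆ A a Sidon set (i.e., every solution (x1,x2,x3,x4) ∈ S^4 of x1 + x2 = x3 + x4 satisfies x1 ∈ {x3, x4}), and t : A → ℂ a function vanishing outside S. Then (1/|A|) · Σ_{χ ∈ Â} |Σ_{x ∈ A} t(x) χ(x)|^4 = 2 · (Σ_{x ∈ A} |t(x)|^2)^2 − Σ_{x ∈ A} |t(x)|^4. -/
/-!
Expanding the fourth power and summing over characters, orthogonality turns the left side into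
`∑ t x1 t x2 conj (t x3) conj (t x4)` over the solutions of `x1 + x2 = x3 + x4`. In a Sidon set
the only solutions are `(a, b, a, b)` and `(a, b, b, a)`, overlapping on the diagonal, which gives
`2 (∑ |t|²)² - ∑ |t|⁴`.
-/

open Finset ComplexConjugate

def IsSidon {A : Type*} [AddCommGroup A] (S : Set A) : Prop :=
  ∀ x1 ∈ S, ∀ x2 ∈ S, ∀ x3 ∈ S, ∀ x4 ∈ S, x1 + x2 = x3 + x4 → x1 = x3 ∨ x1 = x4

theorem Complex.ofReal_norm_pow_four (z : ℂ) :
    ((‖z‖ ^ 4 : ℝ) : ℂ) = z * (z * (conj z * conj z)) := by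
  push_cast
  linear_combination (-((‖z‖ : ℂ) ^ 2 + z * conj z)) * Complex.mul_conj' z

theorem Fintype.sum_add_ite_eq_add_of_ne_zero {ι M : Type*} [Fintype ι] [DecidableEq ι]
    [AddCommMonoid M] {g : ι → M} {a b : ι} (hg : ∀ x, g x ≠ 0 → x = a ∨ x = b) :
    ∑ x, g x + (if a = b then g a else 0) = g a + g b := by
  by_cases hab : a = b
  · subst hab
    rw [if_pos rfl, Fintype.sum_eq_single a fun x hx => by_contra fun h => hx ((hg x h).elim id id)]
  · rw [if_neg hab, add_zero]
    exact Fintype.sum_eq_add a b hab fun x ⟨ha, hb⟩ => by_contra fun h => (hg x h).elim ha hb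

section FourthMoment

variable {A : Type*} [AddCommGroup A] [Fintype A]

/-- With `x4 = x1 + x2 - x3`, the solutions in `S` are `(a, b, a, b)` and `(a, b, b, a)`; the
diagonal `(a, a, a, a)` is counted twice on the right. -/
theorem IsSidon.sum_sub_add_sum_diag {M : Type*} [AddCommMonoid M] {S : Set A} (hS : IsSidon S)
    {f : A → A → A → A → M}
    (hf : ∀ x1 x2 x3 x4, f x1 x2 x3 x4 ≠ 0 → x1 ∈ S ∧ x2 ∈ S ∧ x3 ∈ S ∧ x4 ∈ S) :
    ∑ x1, ∑ x2, ∑ x3, f x1 x2 x3 (x1 + x2 - x3) + ∑ x, f x x x x =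
      ∑ x1, ∑ x2, (f x1 x2 x1 x2 + f x1 x2 x2 x1) := by
  classical
  have hdiag : ∑ x, f x x x x = ∑ x1, ∑ x2, if x1 = x2 then f x1 x2 x1 x2 else 0 := by
    simp only [Fintype.sum_ite_eq]
  rw [hdiag, ← Finset.sum_add_distrib]
  refine Finset.sum_congr rfl fun x1 _ => ?_
  rw [← Finset.sum_add_distrib]
  refine Finset.sum_congr rfl fun x2 _ => ?_
  have hsupp : ∀ x3, f x1 x2 x3 (x1 + x2 - x3) ≠ 0 → x3 = x1 ∨ x3 = x2 := fun x3 h => by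
    obtain ⟨h1, h2, h3, h4⟩ := hf _ _ _ _ h
    refine (hS x1 h1 x2 h2 x3 h3 _ h4 (add_sub_cancel x3 (x1 + x2)).symm).imp Eq.symm fun h => ?_
    exact add_left_cancel (eq_sub_iff_add_eq.mp h)
  simpa only [add_sub_cancel_left, add_sub_cancel_right] using
    Fintype.sum_add_ite_eq_add_of_ne_zero hsupp

theorem AddChar.mul_mul_conj_mul_conj (χ : AddChar A ℂ) (x1 x2 x3 x4 : A) :
    χ x1 * (χ x2 * (conj (χ x3) * conj (χ x4))) = χ (x1 + x2 - x3 - x4) := by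
  rw [← AddChar.map_neg_eq_conj, ← AddChar.map_neg_eq_conj, ← AddChar.map_add_eq_mul,
    ← AddChar.map_add_eq_mul, ← AddChar.map_add_eq_mul]
  congr 1
  abel

theorem AddChar.norm_sum_mul_pow_four (t : A → ℂ) (χ : AddChar A ℂ) :
    ((‖∑ x, t x * χ x‖ ^ 4 : ℝ) : ℂ) = ∑ x1, ∑ x2, ∑ x3, ∑ x4,
      t x1 * t x2 * conj (t x3) * conj (t x4) * χ (x1 + x2 - x3 - x4) := by
  rw [Complex.ofReal_norm_pow_four, map_sum]
  simp only [Finset.sum_mul_sum]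
  simp only [Finset.mul_sum]
  refine sum_congr rfl fun x1 _ => sum_congr rfl fun x2 _ => sum_congr rfl fun x3 _ =>
    sum_congr rfl fun x4 _ => ?_
  rw [← χ.mul_mul_conj_mul_conj, map_mul, map_mul]
  ring

theorem AddChar.sum_norm_sum_mul_pow_four (t : A → ℂ) :
    ((∑ χ : AddChar A ℂ, ‖∑ x, t x * χ x‖ ^ 4 : ℝ) : ℂ) =
      Fintype.card A * ∑ x1, ∑ x2, ∑ x3, t x1 * t x2 * conj (t x3) * conj (t (x1 + x2 - x3)) := by
  classical
  rw [Complex.ofReal_sum]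
  simp only [AddChar.norm_sum_mul_pow_four]
  rw [Finset.mul_sum, Finset.sum_comm]
  refine sum_congr rfl fun x1 _ => ?_
  rw [Finset.mul_sum, Finset.sum_comm]
  refine sum_congr rfl fun x2 _ => ?_
  rw [Finset.mul_sum, Finset.sum_comm]
  refine sum_congr rfl fun x3 _ => ?_
  rw [Finset.sum_comm]
  simp only [← Finset.mul_sum, AddChar.sum_apply_eq_ite, sub_eq_zero, mul_ite, mul_zero,
    Fintype.sum_ite_eq]
  ring

theorem IsSidon.sum_mul_mul_conj_mul_conj {S : Set A} (hS : IsSidon S) {t : A → ℂ}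
    (ht : ∀ x ∉ S, t x = 0) :
    ∑ x1, ∑ x2, ∑ x3, t x1 * t x2 * conj (t x3) * conj (t (x1 + x2 - x3)) =
      ((2 * (∑ x, ‖t x‖ ^ 2) ^ 2 - ∑ x, ‖t x‖ ^ 4 : ℝ) : ℂ) := by
  have hmem : ∀ x, t x ≠ 0 → x ∈ S := fun x => Not.imp_symm (ht x)
  have hsupp : ∀ x1 x2 x3 x4 : A, t x1 * t x2 * conj (t x3) * conj (t x4) ≠ 0 →
      x1 ∈ S ∧ x2 ∈ S ∧ x3 ∈ S ∧ x4 ∈ S := by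
    simp only [ne_eq, mul_eq_zero, map_eq_zero, not_or]
    exact fun x1 x2 x3 x4 ⟨⟨⟨h1, h2⟩, h3⟩, h4⟩ => ⟨hmem _ h1, hmem _ h2, hmem _ h3, hmem _ h4⟩
  have hsq : ∀ x, t x * conj (t x) = (‖t x‖ : ℂ) ^ 2 := fun x => Complex.mul_conj' (t x)
  have hpair : ∀ a b, t a * t b * conj (t a) * conj (t b) + t a * t b * conj (t b) * conj (t a) =
      2 * ((‖t a‖ : ℂ) ^ 2 * (‖t b‖ : ℂ) ^ 2) := fun a b => by
    rw [← hsq, ← hsq]; ring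
  have hdiag : ∀ a, t a * t a * conj (t a) * conj (t a) = (‖t a‖ : ℂ) ^ 4 := fun a => by
    rw [show (‖t a‖ : ℂ) ^ 4 = ((‖t a‖ : ℂ) ^ 2) ^ 2 by ring, ← hsq]; ring
  rw [eq_sub_of_add_eq (hS.sum_sub_add_sum_diag hsupp)]
  simp only [hpair, hdiag]
  simp only [← Finset.mul_sum, ← Finset.sum_mul]
  push_cast
  ring

end FourthMoment

theorem stmt_4 {A : Type*} [AddCommGroup A] [Fintype A] (S : Set A)
    (hSidon : ∀ x1 ∈ S, ∀ x2 ∈ S, ∀ x3 ∈ S, ∀ x4 ∈ S,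
      x1 + x2 = x3 + x4 → x1 = x3 ∨ x1 = x4)
    (t : A → ℂ) (ht : ∀ x ∉ S, t x = 0) :
    (1 / (Fintype.card A : ℝ)) *
        ∑ χ : AddChar A ℂ, ‖∑ x : A, t x * χ x‖ ^ 4 =
      2 * (∑ x : A, ‖t x‖ ^ 2) ^ 2 - ∑ x : A, ‖t x‖ ^ 4 := by
  have hmoment := AddChar.sum_norm_sum_mul_pow_four t
  rw [IsSidon.sum_mul_mul_conj_mul_conj hSidon ht, ← Complex.ofReal_natCast, ← Complex.ofReal_mul,
    Complex.ofReal_inj] at hmoment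
  rw [hmoment]
  field_simp
end

section
/- Let m ≥ 1 and let α_1, …, α_m be complex numbers of modulus 1. Then limsup_{n → ∞} |α_1^n + α_2^n + ⋯ + α_m^n| ≥ √m. -/
/-!
Write `S n = ‖∑ i, α i ^ n‖`. Expanding the square, `∑_{n<N} S n ^ 2` is the sum over pairs `(i, j)`
of the real parts of the geometric sums `∑_{n<N} (α i * conj (α j)) ^ n`. The `m` diagonal pairs
contribute `N` each, and every other geometric sum is bounded (its ratio has modulus one), so
`∑_{n<N} S n ^ 2 ≥ m N - C`. If `S n ≤ b` for all large `n`, the same sum is at most `b ^ 2 N + O(1)`,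
hence `m ≤ b ^ 2`.
-/

open Finset Filter ComplexConjugate

lemma le_of_forall_mul_le_mul_add {c b D : ℝ} (h : ∀ k : ℕ, c * k ≤ b * k + D) : c ≤ b := by
  by_contra! hbc
  obtain ⟨k, hk⟩ := exists_nat_gt (D / (c - b))
  have := h k
  rw [div_lt_iff₀ (sub_pos.mpr hbc)] at hk
  linarith

lemma le_of_forall_mul_sub_le_sum_range_of_eventually_le {u : ℕ → ℝ} {c C b : ℝ}
    (hsum : ∀ N : ℕ, c * N - C ≤ ∑ n ∈ range N, u n) (hb : ∀ᶠ n in atTop, u n ≤ b) : c ≤ b := by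
  obtain ⟨N₀, hN₀⟩ := eventually_atTop.mp hb
  refine le_of_forall_mul_le_mul_add (D := ∑ n ∈ range N₀, u n + C - c * N₀) fun k => ?_
  have htail : ∑ j ∈ range k, u (N₀ + j) ≤ b * k := by
    simpa [mul_comm] using sum_le_sum fun j (_ : j ∈ range k) => hN₀ (N₀ + j) (Nat.le_add_right _ _)
  have := hsum (N₀ + k)
  rw [sum_range_add] at this
  push_cast at this
  linarith

lemma norm_geom_sum_le {𝕜 : Type*} [NormedField 𝕜] {ζ : 𝕜} (hζ : ‖ζ‖ ≤ 1) (h1 : ζ ≠ 1) (N : ℕ) :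
    ‖∑ n ∈ range N, ζ ^ n‖ ≤ 2 / ‖ζ - 1‖ := by
  rw [geom_sum_eq h1, norm_div]
  gcongr
  calc ‖ζ ^ N - 1‖ ≤ ‖ζ‖ ^ N + ‖(1 : 𝕜)‖ := by grw [norm_sub_le, norm_pow]
    _ ≤ 2 := by grw [hζ]; norm_num

lemma exists_forall_neg_le_re_geom_sum {ζ : ℂ} (hζ : ‖ζ‖ ≤ 1) :
    ∃ C, ∀ N, -C ≤ (∑ n ∈ range N, ζ ^ n).re := by
  by_cases h1 : ζ = 1
  · exact ⟨0, fun N => by simp [h1]⟩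
  · exact ⟨2 / ‖ζ - 1‖, fun N => neg_le_of_abs_le <|
      (Complex.abs_re_le_norm _).trans (norm_geom_sum_le hζ h1 N)⟩

lemma sq_norm_sum_eq_sum_sum_re {ι : Type*} [Fintype ι] (z : ι → ℂ) :
    ‖∑ i, z i‖ ^ 2 = ∑ i, ∑ j, (z i * conj (z j)).re := by
  rw [← Complex.normSq_eq_norm_sq, ← Complex.ofReal_re (Complex.normSq _), ← Complex.mul_conj,
    map_sum, sum_mul_sum, Complex.re_sum]
  simp only [Complex.re_sum]

section UnimodularPowerSums

variable {ι : Type*} [Fintype ι] {α : ι → ℂ}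

lemma norm_sum_pow_le_card (hα : ∀ i, ‖α i‖ = 1) (n : ℕ) :
    ‖∑ i, α i ^ n‖ ≤ Fintype.card ι := by
  simpa [norm_pow, hα] using norm_sum_le univ fun i => α i ^ n

lemma sum_range_sq_norm_sum_pow (N : ℕ) :
    ∑ n ∈ range N, ‖∑ i, α i ^ n‖ ^ 2 =
      ∑ i, ∑ j, (∑ n ∈ range N, (α i * conj (α j)) ^ n).re := by
  simp only [sq_norm_sum_eq_sum_sum_re, Complex.re_sum, mul_pow, map_pow]
  rw [sum_comm]
  exact sum_congr rfl fun i _ => sum_comm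

lemma exists_forall_card_mul_sub_le_sum_range_sq_norm_sum_pow (hα : ∀ i, ‖α i‖ = 1) :
    ∃ C, ∀ N : ℕ, Fintype.card ι * N - C ≤ ∑ n ∈ range N, ‖∑ i, α i ^ n‖ ^ 2 := by
  classical
  have hdiag (i : ι) : α i * conj (α i) = 1 := by
    rw [Complex.mul_conj, Complex.normSq_eq_norm_sq, hα]; simp
  choose C hC using fun i j => exists_forall_neg_le_re_geom_sum (ζ := α i * conj (α j))
    (by simp [hα])
  refine ⟨∑ i, ∑ j ∈ {i}ᶜ, C i j, fun N => ?_⟩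
  rw [sum_range_sq_norm_sum_pow]
  calc Fintype.card ι * (N : ℝ) - ∑ i, ∑ j ∈ {i}ᶜ, C i j
      = ∑ i, ((N : ℝ) + ∑ j ∈ {i}ᶜ, -C i j) := by
        simp [sum_add_distrib, sum_neg_distrib, sub_eq_add_neg]
    _ ≤ ∑ i, ((∑ n ∈ range N, (α i * conj (α i)) ^ n).re +
          ∑ j ∈ {i}ᶜ, (∑ n ∈ range N, (α i * conj (α j)) ^ n).re) := by
        gcongr with i _ j
        · simp [hdiag]
        · exact hC i j N
    _ = _ := sum_congr rfl fun i _ => (Fintype.sum_eq_add_sum_compl i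
          fun j => (∑ n ∈ range N, (α i * conj (α j)) ^ n).re).symm

end UnimodularPowerSums

theorem stmt_7_general (m : ℕ) (α : Fin m → ℂ) (hα : ∀ i, ‖α i‖ = 1) :
    Real.sqrt m ≤
      Filter.limsup (fun n : ℕ => ‖∑ i, α i ^ n‖) Filter.atTop := by
  obtain ⟨C, hC⟩ := exists_forall_card_mul_sub_le_sum_range_sq_norm_sum_pow hα
  refine le_limsup_of_le (isBoundedUnder_of ⟨m, by simpa using norm_sum_pow_le_card hα⟩)
    fun b hb => ?_
  obtain ⟨n₀, hn₀⟩ := hb.exists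
  rw [Real.sqrt_le_left ((norm_nonneg _).trans hn₀)]
  exact le_of_forall_mul_sub_le_sum_range_of_eventually_le (by simpa using hC)
    (hb.mono fun n hn => pow_le_pow_left₀ (norm_nonneg _) hn 2)

theorem stmt_7 (m : ℕ) (hm : 1 ≤ m) (α : Fin m → ℂ) (hα : ∀ i, ‖α i‖ = 1) :
    Real.sqrt m ≤
      Filter.limsup (fun n : ℕ => ‖∑ i, α i ^ n‖) Filter.atTop :=
  stmt_7_general m α hα
end

section
/- Let G be a finite group and V a faithful finite-dimensional complex representation of G. Then every irreducible complex representation of G occurs as a direct summand (equivalently, as a subrepresentation) of the tensor power V^{⊗m} for some integer m ≥ 0. -/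
open CategoryTheory MonoidalCategory Polynomial

section Aux

/-- Every root of the characteristic polynomial of a complex matrix admits an eigenvector. -/
private lemma burnside_eig {n : ℕ} (M : Matrix (Fin n) (Fin n) ℂ) (μ : ℂ)
    (h : M.charpoly.IsRoot μ) : ∃ v ≠ 0, M.mulVec v = μ • v := by
  have hdet : (Matrix.diagonal (fun _ : Fin n => μ) - M).det = 0 := by
    have hmap : (Matrix.charmatrix M).map (Polynomial.evalRingHom μ) =
        Matrix.diagonal (fun _ : Fin n => μ) - M := by
      ext i j
      by_cases hij : i = j <;>
        simp [hij, Matrix.charmatrix_apply, Matrix.diagonal, Matrix.sub_apply]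
    have h2 := RingHom.map_det (Polynomial.evalRingHom μ) (Matrix.charmatrix M)
    rw [RingHom.mapMatrix_apply, hmap] at h2
    rw [← h2]
    simpa [Matrix.charpoly] using h
  obtain ⟨v, hv, hv2⟩ := (Matrix.exists_mulVec_eq_zero_iff).2 hdet
  refine ⟨v, hv, ?_⟩
  rw [Matrix.sub_mulVec] at hv2
  have h3 := sub_eq_zero.mp hv2
  rw [← h3]
  ext i
  simp [Matrix.mulVec_diagonal]

/-- A complex matrix of finite order whose trace equals its size is the identity. -/
private lemma burnside_mat_key {n k : ℕ} (hk : 0 < k) (M : Matrix (Fin n) (Fin n) ℂ)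
    (hMk : M ^ k = 1) (htr : M.trace = n) : M = 1 := by
  rcases Nat.eq_zero_or_pos n with hn | hn
  · subst hn; exact Subsingleton.elim _ _
  have hroot : ∀ μ ∈ M.charpoly.roots, μ ^ k = 1 := by
    intro μ hμ
    obtain ⟨v, hv, hv2⟩ := burnside_eig M μ (isRoot_of_mem_roots hμ)
    have hpow : ∀ j : ℕ, (M ^ j).mulVec v = μ ^ j • v := by
      intro j
      induction j with
      | zero => simp
      | succ j ih =>
        rw [pow_succ, ← Matrix.mulVec_mulVec, hv2, Matrix.mulVec_smul, ih,
          pow_succ, smul_smul, mul_comm]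
    have h1 := hpow k
    rw [hMk, Matrix.one_mulVec] at h1
    have h2 : (μ ^ k - 1) • v = 0 := by rw [sub_smul, one_smul, ← h1, sub_self]
    rcases smul_eq_zero.mp h2 with h | h
    · exact sub_eq_zero.mp h
    · exact absurd h hv
  have hcard : M.charpoly.roots.card = n := by
    have := (Polynomial.splits_iff_card_roots.mp (IsAlgClosed.splits M.charpoly))
    rwa [Matrix.charpoly_natDegree_eq_dim, Fintype.card_fin] at this
  have habs : ∀ ν ∈ M.charpoly.roots, ‖ν‖ = 1 := by
    intro ν hν
    have h1 : ‖ν‖ ^ k = 1 := by rw [← norm_pow, hroot ν hν, norm_one]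
    have hx : (0:ℝ) ≤ ‖ν‖ := norm_nonneg ν
    rcases lt_trichotomy (‖ν‖) 1 with h2 | h2 | h2
    · nlinarith [pow_lt_one₀ hx h2 hk.ne']
    · exact h2
    · nlinarith [one_lt_pow₀ h2 hk.ne']
  have hone : ∀ μ ∈ M.charpoly.roots, μ = 1 := by
    intro μ hμ
    by_contra hne
    have hsum : M.charpoly.roots.sum = (n : ℂ) := by
      rw [← Matrix.trace_eq_sum_roots_charpoly, htr]
    have hre : (M.charpoly.roots.map Complex.re).sum = (n : ℝ) := by
      have h2 := map_multiset_sum Complex.reAddGroupHom M.charpoly.roots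
      rw [hsum] at h2
      simpa [Complex.coe_reAddGroupHom] using h2.symm
    have hle : ∀ ν ∈ M.charpoly.roots, Complex.re ν ≤ (fun _ : ℂ => (1:ℝ)) ν := by
      intro ν hν
      calc ν.re ≤ ‖ν‖ := Complex.re_le_norm ν
      _ = 1 := habs ν hν
    have hlt : ∃ ν ∈ M.charpoly.roots, Complex.re ν < (fun _ : ℂ => (1:ℝ)) ν := by
      refine ⟨μ, hμ, ?_⟩
      rcases lt_or_eq_of_le (hle μ hμ) with h | h
      · exact h
      · exfalso
        apply hne
        have habs2 := habs μ hμ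
        have hsq := Complex.sq_norm μ
        rw [habs2] at hsq
        have him : μ.im = 0 := by
          have := Complex.normSq_apply μ
          simp only at h
          nlinarith
        apply Complex.ext
        · simpa using h
        · simpa using him
    have hslt := Multiset.sum_lt_sum hle hlt
    rw [hre] at hslt
    rw [Multiset.map_const', Multiset.sum_replicate, hcard] at hslt
    simp at hslt
  -- now the minimal polynomial argument
  haveI : Nonempty (Fin n) := ⟨⟨0, hn⟩⟩
  have hint : IsIntegral ℂ M := Matrix.isIntegral M
  set p := minpoly ℂ M with hp
  have hmonic : p.Monic := minpoly.monic hint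
  have hdvd1 : p ∣ (X ^ k - C 1 : ℂ[X]) := by
    apply minpoly.dvd
    simp [hMk]
  have hsep : (X ^ k - C (1:ℂ)).Separable :=
    separable_X_pow_sub_C (1:ℂ) (by exact_mod_cast hk.ne' : (k:ℂ) ≠ 0) one_ne_zero
  have psep : p.Separable := Polynomial.Separable.of_dvd hsep hdvd1
  have proots1 : ∀ μ ∈ p.roots, μ = 1 := by
    intro μ hμ
    apply hone
    exact Multiset.mem_of_le
      (Polynomial.roots.le_of_dvd (Matrix.charpoly_monic M).ne_zero
        (Matrix.minpoly_dvd_charpoly M)) hμ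
  have hd : 0 < p.natDegree := minpoly.natDegree_pos hint
  have hcard2 : p.roots.card = p.natDegree :=
    (Polynomial.splits_iff_card_roots.mp (IsAlgClosed.splits p))
  have hroots : p.roots = Multiset.replicate p.natDegree 1 :=
    Multiset.eq_replicate.2 ⟨hcard2, proots1⟩
  have hpeq : p = (X - C 1) ^ p.natDegree := by
    conv_lhs => rw [(IsAlgClosed.splits p).eq_prod_roots_of_monic hmonic]
    rw [hroots, Multiset.map_replicate, Multiset.prod_replicate]
  have hd1 : p.natDegree = 1 := by
    by_contra hne
    have h2 : 2 ≤ p.natDegree := by omega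
    have hdvd2 : (X - C (1:ℂ)) * (X - C 1) ∣ p := by
      rw [hpeq, ← pow_two]
      exact pow_dvd_pow _ h2
    exact Polynomial.not_isUnit_X_sub_C 1 (psep.squarefree _ hdvd2)
  have hfin : p = X - C 1 := by rw [hpeq, hd1, pow_one]
  have haev : (aeval M) p = 0 := minpoly.aeval ℂ M
  rw [hfin] at haev
  simp only [map_sub, aeval_X, aeval_C] at haev
  have := sub_eq_zero.mp haev
  simpa using this

/-- If a faithful representation's character takes the value `dim V` at `g`, then `g = 1`. -/
private lemma burnside_rep_key {G : Type} [Group G] [Fintype G] (V : FDRep ℂ G)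
    (hfaith : Function.Injective ⇑V.ρ) (g : G)
    (h : V.character g = (Module.finrank ℂ V : ℂ)) : g = 1 := by
  classical
  set b := Module.finBasis ℂ V
  set M := LinearMap.toMatrix b b (V.ρ g) with hM
  have hMk : M ^ Fintype.card G = 1 := by
    have h1 : (V.ρ g) ^ Fintype.card G = 1 := by
      rw [← map_pow, pow_card_eq_one, map_one]
    have heq : LinearMap.toMatrixAlgEquiv b (V.ρ g) = M := rfl
    rw [← heq, ← map_pow (LinearMap.toMatrixAlgEquiv b) (V.ρ g) (Fintype.card G), h1, map_one]
  have htr : M.trace = (Module.finrank ℂ V : ℂ) := by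
    rw [← LinearMap.trace_eq_matrix_trace]
    exact h
  have hM1 := burnside_mat_key Fintype.card_pos M hMk htr
  apply hfaith
  rw [map_one]
  apply (LinearMap.toMatrix b b).injective
  rw [← hM, hM1, LinearMap.toMatrix_one]

/-- A nonzero averaged character pairing produces a nonzero morphism. -/
private lemma burnside_exists_hom {G : Type} [Group G] [Fintype G] (W X : FDRep ℂ G)
    (h : ∑ g : G, W.character g⁻¹ * X.character g ≠ 0) :
    ∃ f : W ⟶ X, f ≠ 0 := by
  classical
  haveI : Invertible (Fintype.card G : ℂ) :=
    invertibleOfNonzero (Nat.cast_ne_zero.2 Fintype.card_ne_zero)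
  set U : FDRep ℂ G := FDRep.of (Representation.linHom W.ρ X.ρ) with hU
  have havg := FDRep.average_char_eq_finrank_invariants U
  have hsum : ∑ g : G, U.character g = ∑ g : G, W.character g⁻¹ * X.character g := by
    apply Finset.sum_congr rfl
    intro g _
    exact FDRep.char_linHom W X g
  rw [hsum] at havg
  have hfr : Module.finrank ℂ (Representation.invariants U.ρ) ≠ 0 := by
    intro h0
    rw [h0] at havg
    apply h
    have h2 : (∑ g : G, W.character g⁻¹ * X.character g) =
        (Fintype.card G : ℂ) •
          (⅟(Fintype.card G : ℂ) • ∑ g : G, W.character g⁻¹ * X.character g) := by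
      rw [smul_smul, mul_invOf_self, one_smul]
    rw [h2, smul_eq_mul (a := ⅟ _), invOf_eq_inv, Fintype.card_eq_nat_card, havg]
    simp
  have hinv : Representation.invariants U.ρ ≠ ⊥ := by
    intro hbot
    apply hfr
    rw [hbot]
    simp
  obtain ⟨φ, hφmem, hφ⟩ := Submodule.exists_mem_ne_zero_of_ne_bot hinv
  set e := Representation.linHom.invariantsEquivFDRepHom (k := ℂ) (G := G) W X
  refine ⟨e ⟨φ, hφmem⟩, ?_⟩
  intro h0
  apply hφ
  have h1 : (⟨φ, hφmem⟩ : Representation.invariants (Representation.linHom W.ρ X.ρ)) = 0 := by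
    apply e.injective
    simpa using h0
  simpa using congrArg Subtype.val h1

end Aux

/-- The `m`-th tensor power of an object of `FDRep ℂ G`. -/
noncomputable def tpow {G : Type} [Group G] (V : FDRep ℂ G) : ℕ → FDRep ℂ G
  | 0 => 𝟙_ (FDRep ℂ G)
  | n + 1 => tpow V n ⊗ V

private lemma burnside_char_tpow {G : Type} [Group G] (V : FDRep ℂ G) (m : ℕ) (g : G) :
    (tpow V m).character g = V.character g ^ m := by
  induction m with
  | zero =>
    show (𝟙_ (FDRep ℂ G)).character g = 1
    rw [FDRep.character]
    have h1 : (𝟙_ (FDRep ℂ G)).ρ g = LinearMap.id := rfl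
    rw [h1]
    have h2 : LinearMap.trace ℂ _ (LinearMap.id (M := 𝟙_ (FDRep ℂ G))) =
        Module.finrank ℂ (𝟙_ (FDRep ℂ G)) := LinearMap.trace_id ℂ _
    rw [h2]
    have h3 : Module.finrank ℂ (𝟙_ (FDRep ℂ G) : FDRep ℂ G) = 1 := Module.finrank_self ℂ
    rw [h3]
    simp
  | succ m ih =>
    show ((tpow V m) ⊗ V).character g = _
    rw [FDRep.char_tensor]
    simp [ih, pow_succ]

theorem stmt_14 {G : Type} [Group G] [Fintype G] (V : FDRep ℂ G)
    (hfaith : Function.Injective ⇑V.ρ) (W : FDRep ℂ G) [Simple W] :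
    ∃ (m : ℕ) (f : W ⟶ tpow V m), Mono f := by
  classical
  -- W is a nontrivial module
  have hWnt : Nontrivial W := by
    by_contra hsub
    rw [not_nontrivial_iff_subsingleton] at hsub
    apply CategoryTheory.id_nonzero W
    apply Action.hom_ext
    apply FGModuleCat.hom_ext
    apply LinearMap.ext
    intro v
    haveI : Subsingleton ↑W.V.obj := hsub
    exact Subsingleton.elim _ _
  have hw1 : W.character (1 : G)⁻¹ ≠ 0 := by
    rw [inv_one, FDRep.char_one]
    exact_mod_cast (Module.finrank_pos (R := ℂ) (M := W)).ne'
  -- key: some tensor power pairs nontrivially with W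
  have hkey : ∃ m : ℕ, ∑ g : G, W.character g⁻¹ * V.character g ^ m ≠ 0 := by
    by_contra hall
    push_neg at hall
    set χ := V.character with hχ
    set w : G → ℂ := fun g => W.character g⁻¹ with hw
    have hpoly : ∀ p : ℂ[X], ∑ g : G, w g * p.eval (χ g) = 0 := by
      intro p
      have hexp : ∀ g : G, w g * p.eval (χ g) =
          ∑ i ∈ Finset.range (p.natDegree + 1), p.coeff i * (w g * χ g ^ i) := by
        intro g
        rw [Polynomial.eval_eq_sum_range, Finset.mul_sum]
        apply Finset.sum_congr rfl
        intro i _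
        ring
      calc ∑ g : G, w g * p.eval (χ g)
          = ∑ g : G, ∑ i ∈ Finset.range (p.natDegree + 1), p.coeff i * (w g * χ g ^ i) :=
            Finset.sum_congr rfl fun g _ => hexp g
        _ = ∑ i ∈ Finset.range (p.natDegree + 1), ∑ g : G, p.coeff i * (w g * χ g ^ i) :=
            Finset.sum_comm
        _ = ∑ i ∈ Finset.range (p.natDegree + 1), p.coeff i * ∑ g : G, w g * χ g ^ i := by
            apply Finset.sum_congr rfl
            intro i _
            rw [Finset.mul_sum]
        _ = 0 := by
            apply Finset.sum_eq_zero
            intro i _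
            rw [hall i, mul_zero]
    set n₀ : ℂ := (Module.finrank ℂ V : ℂ) with hn₀
    set S : Finset ℂ := Finset.image χ Finset.univ with hS
    set p : ℂ[X] := ∏ c ∈ S.erase n₀, (X - C c) with hpdef
    have h1 := hpoly p
    have hzero : ∀ g ∈ (Finset.univ : Finset G), g ≠ 1 → w g * p.eval (χ g) = 0 := by
      intro g _ hg1
      have hne : χ g ≠ n₀ := fun hc => hg1 (burnside_rep_key V hfaith g hc)
      have hmem : χ g ∈ S.erase n₀ :=
        Finset.mem_erase.2 ⟨hne, Finset.mem_image_of_mem χ (Finset.mem_univ g)⟩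
      have hev : p.eval (χ g) = 0 := by
        rw [hpdef, Polynomial.eval_prod]
        apply Finset.prod_eq_zero hmem
        simp
      rw [hev, mul_zero]
    have h2 : w 1 * p.eval (χ 1) = 0 := by
      rw [← h1]
      exact (Finset.sum_eq_single (1 : G) hzero (fun h => absurd (Finset.mem_univ _) h)).symm
    have hχ1 : χ 1 = n₀ := by
      rw [hχ, hn₀, FDRep.char_one]
    have hpev : p.eval n₀ ≠ 0 := by
      rw [hpdef, Polynomial.eval_prod]
      apply Finset.prod_ne_zero_iff.2
      intro c hc
      simp only [Polynomial.eval_sub, Polynomial.eval_X, Polynomial.eval_C]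
      exact sub_ne_zero.2 (Ne.symm (Finset.mem_erase.1 hc).1)
    rw [hχ1] at h2
    rcases mul_eq_zero.mp h2 with h | h
    · exact hw1 h
    · exact hpev h
  obtain ⟨m, hm⟩ := hkey
  have hsum : ∑ g : G, W.character g⁻¹ * (tpow V m).character g ≠ 0 := by
    intro h0
    apply hm
    rw [← h0]
    apply Finset.sum_congr rfl
    intro g _
    rw [burnside_char_tpow]
  obtain ⟨f, hf⟩ := burnside_exists_hom W (tpow V m) hsum
  exact ⟨m, f, CategoryTheory.mono_of_nonzero_from_simple hf⟩
end

section
/- Let K be a field, s ≥ 1 an integer, and V = K^s with standard basis (e_1, …, e_s). For a subset I ⊆ {1,…,s}, let V_I be the span of {e_j : j ∈ I}. Fix an integer i with 1 ≤ i ≤ s, and suppose that for every subset I ⊆ {1,…,s} with |I| > s − i we are given a nonzero subspace H_I ⊆ V_I. Then the subspace of V spanned by the union of all the H_I has dimension at least i. -/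
/-!
A subspace `W` of `K^s` is detected by at most `dim W` coordinates: some set `C` of
`≤ dim W` coordinates is such that no nonzero vector of `W` vanishes on `C` (remove one
coordinate on which `W` is not identically zero and induct on the dimension). If the
span `W` of the `H_I` had dimension `< i`, then `I = Cᶜ` has more than `s - i` elements,
and a nonzero vector of `H_I ⊆ W` would vanish on `C`.
-/

namespace Submodule

open Module

variable {K ι : Type*} [DivisionRing K]

theorem exists_finset_card_le_finrank_and_eq_zero_of_apply_eq_zero
    (W : Submodule K (ι → K)) [FiniteDimensional K W] :
    ∃ C : Finset ι, C.card ≤ finrank K W ∧ ∀ w ∈ W, (∀ j ∈ C, w j = 0) → w = 0 := by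
  induction hd : finrank K W using Nat.strong_induction_on generalizing W with
  | _ d ih =>
  classical
  by_cases hW : W = ⊥
  · exact ⟨∅, Nat.zero_le _, fun w hw _ => by simpa [hW] using hw⟩
  obtain ⟨w₀, hw₀, hw₀_ne⟩ := (Submodule.ne_bot_iff W).mp hW
  obtain ⟨j, hj⟩ := Function.ne_iff.mp hw₀_ne
  set W' := W ⊓ LinearMap.ker (LinearMap.proj j : (ι → K) →ₗ[K] K)
  have hlt : finrank K W' < d :=
    hd ▸ finrank_lt_finrank_of_lt
      (inf_le_left.lt_of_ne fun h => hj (by rw [← h] at hw₀; simpa using hw₀.2))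
  obtain ⟨C, hC_card, hC⟩ := ih _ hlt W' rfl
  refine ⟨insert j C, (Finset.card_insert_le _ _).trans (by omega), fun w hw hwC => ?_⟩
  exact hC w ⟨hw, hwC j (Finset.mem_insert_self _ _)⟩
    fun c hc => hwC c (Finset.mem_insert_of_mem hc)

theorem span_single_image_le_ker_proj [DecidableEq ι] {I : Set ι} {j : ι} (hj : j ∉ I) :
    span K ((fun k => Pi.single k (1 : K)) '' I) ≤ LinearMap.ker (LinearMap.proj j) := by
  refine span_le.mpr ?_
  rintro _ ⟨k, hk, rfl⟩
  simp [Pi.single_eq_of_ne (ne_of_mem_of_not_mem hk hj).symm]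

end Submodule

theorem stmt_18_general {K : Type*} [Field K] (s : ℕ) (i : ℕ)
    (his : i ≤ s)
    (H : Finset (Fin s) → Submodule K (Fin s → K))
    (hne : ∀ I : Finset (Fin s), s - i < I.card → H I ≠ ⊥)
    (hsub : ∀ I : Finset (Fin s), s - i < I.card →
      H I ≤ Submodule.span K ((fun j => Pi.single j (1 : K)) '' ↑I)) :
    i ≤ Module.finrank K
      ↥(⨆ (I : Finset (Fin s)) (_ : s - i < I.card), H I) := by
  by_contra! hlt
  set W := ⨆ (I : Finset (Fin s)) (_ : s - i < I.card), H I
  obtain ⟨C, hC_card, hC⟩ := W.exists_finset_card_le_finrank_and_eq_zero_of_apply_eq_zero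
  have hC_compl : s - i < Cᶜ.card := by
    rw [Finset.card_compl, Fintype.card_fin]
    omega
  obtain ⟨x, hxH, hx_ne⟩ := (Submodule.ne_bot_iff _).mp (hne Cᶜ hC_compl)
  have hxW : x ∈ W := le_iSup₂ (f := fun I (_ : s - i < I.card) => H I) Cᶜ hC_compl hxH
  refine hx_ne (hC x hxW fun c hc => ?_)
  exact Submodule.span_single_image_le_ker_proj (by simpa using hc) (hsub Cᶜ hC_compl hxH)

theorem stmt_18 {K : Type*} [Field K] (s : ℕ) (hs : 1 ≤ s) (i : ℕ)
    (hi1 : 1 ≤ i) (his : i ≤ s)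
    (H : Finset (Fin s) → Submodule K (Fin s → K))
    (hne : ∀ I : Finset (Fin s), s - i < I.card → H I ≠ ⊥)
    (hsub : ∀ I : Finset (Fin s), s - i < I.card →
      H I ≤ Submodule.span K ((fun j => Pi.single j (1 : K)) '' ↑I)) :
    i ≤ Module.finrank K
      ↥(⨆ (I : Finset (Fin s)) (_ : s - i < I.card), H I) :=
  stmt_18_general s i his H hne hsub
end
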